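/- Fixed-point characterization of the resource-bounded Release modality (correctness of the release-strategy search): Let M be an RB-CGS#, A a nonempty coalition, b a resource bound, s a state, and φ, ψ formulas of RB±ATL#. Then M, s ⊨ ⟨⟨A^b⟩⟩ φ R ψ if and only if M, s ⊨ ψ and at least one of the following holds: (i) M, s ⊨ φ; (ii) there exists σ_A ∈ D_A(s) such that either cons(s, (σ_A)_a) ≤ b_a fails for some a ∈ A or out(s, σ_A) is empty; (iii) there exists σ_A ∈ D_A(s) with cons(s, (σ_A)_a) ≤ b_a componentwise for every a ∈ A, out(s, σ_A) nonempty, and M, s' ⊨ ⟨⟨A^{b'}⟩⟩ φ R ψ for every s' ∈ out(s, σ_A), where b'_a = b_a − cons(s, (σ_A)_a) + prod(s, (σ_A)_a) for each a ∈ A. -/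

import Mathlib

/-!
Every step costs each agent of `A` at least one unit of the diminishing resource, which is never
produced, so b-consistent computations have bounded length and b-maximal ones exist; in particular
a winning strategy gives `ψ` at `s`. A b-maximal computation from `s` under `F` is either `[s]`,
when the first joint action `F [s]` is unaffordable or has no outcome, or `s` followed by a
b'-maximal computation from a successor `s'` under `F` shifted by one step, where `b'` is what is
left after paying for `F [s]`. As `φ R ψ` holds along `s :: λ` iff `ψ` holds at `s` and either `φ`
holds at `s` or `φ R ψ` holds along `λ`, the shifted strategy witnesses the right-hand side;
conversely, playing `σ_A` first and then strategies winning from each successor wins from `s`.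
-/

/-- A resource-bounded concurrent game structure with a diminishing resource (RB-CGS#). -/
structure RBCGS (Agt S Act Res : Type) where
  /-- available actions for each agent in each state -/
  d : S → Agt → Set Act
  d_ne : ∀ s a, (d s a).Nonempty
  /-- cost function (negative = consumption, positive = production) -/
  cost : S → Act → Res → ℤ
  /-- the distinguished diminishing resource (the "first" resource) -/
  res1 : Res
  /-- every available action consumes at least one unit of the diminishing resource -/
  cost_first : ∀ s (a : Agt) (α : Act), α ∈ d s a → cost s α res1 ≤ -1
  /-- partial transition function on joint actions -/
  tr : S → (Agt → Act) → Option S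

namespace RBCGS

variable {Agt S Act Res : Type}

/-- consumption of resource ρ by action α at state s : `|min(0, c(s,α))|`. -/
def consR (M : RBCGS Agt S Act Res) (s : S) (α : Act) (ρ : Res) : ℕ :=
  (min 0 (M.cost s α ρ)).natAbs

/-- production of resource ρ by action α at state s : `max(0, c(s,α))`. -/
def prodR (M : RBCGS Agt S Act Res) (s : S) (α : Act) (ρ : Res) : ℕ :=
  (max 0 (M.cost s α ρ)).toNat

/-- σ is a (projection of a) joint action for coalition A at state s. -/
def JointAt (M : RBCGS Agt S Act Res) (A : Set Agt) (s : S) (σ : Agt → Act) : Prop :=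
  ∀ a ∈ A, σ a ∈ M.d s a

/-- outcomes of a joint action of coalition A at state s. -/
def outA (M : RBCGS Agt S Act Res) (A : Set Agt) (s : S) (σA : Agt → Act) : Set S :=
  { s' | ∃ σ : Agt → Act, (∀ a, σ a ∈ M.d s a) ∧ (∀ a ∈ A, σ a = σA a) ∧
    M.tr s σ = some s' }

variable [Inhabited S]

/-- F is a strategy for coalition A : on every nonempty history it prescribes a joint
action available to A at the last state of the history. -/
def Strategy (M : RBCGS Agt S Act Res) (A : Set Agt) (F : List S → Agt → Act) : Prop :=
  ∀ l : List S, l ≠ [] → M.JointAt A (l.getD (l.length - 1) default) (F l)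

/-- l is a (finite, nonempty) computation starting at s consistent with strategy F
(the computation `λ[1..k]` is represented 0-based as `l[0..k-1]`). -/
def ConsistentFrom (M : RBCGS Agt S Act Res) (A : Set Agt) (F : List S → Agt → Act)
    (s : S) (l : List S) : Prop :=
  l ≠ [] ∧ l.getD 0 default = s ∧
    ∀ i, i + 1 < l.length →
      l.getD (i + 1) default ∈ M.outA A (l.getD i default) (F (l.take (i + 1)))

/-- `eAvail M F b l i a ρ` is the amount `e_a(λ[i+1])` of resource ρ available to a
after i steps of l under strategy F with initial bound b. -/
def eAvail (M : RBCGS Agt S Act Res) (F : List S → Agt → Act)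
    (b : Agt → Res → ℕ) (l : List S) : ℕ → Agt → Res → ℤ
  | 0 => fun a ρ => (b a ρ : ℤ)
  | i + 1 => fun a ρ =>
      eAvail M F b l i a ρ
        - (M.consR (l.getD i default) (F (l.take (i + 1)) a) ρ : ℤ)
        + (M.prodR (l.getD i default) (F (l.take (i + 1)) a) ρ : ℤ)

/-- l is b-consistent with strategy F for coalition A. -/
def BConsistent (M : RBCGS Agt S Act Res) (A : Set Agt) (F : List S → Agt → Act)
    (b : Agt → Res → ℕ) (l : List S) : Prop :=
  ∀ a ∈ A, ∀ i, i + 1 < l.length → ∀ ρ,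
    (M.consR (l.getD i default) (F (l.take (i + 1)) a) ρ : ℤ) ≤ M.eAvail F b l i a ρ

/-- l is a b-maximal computation from s consistent with F. -/
def BMaximal (M : RBCGS Agt S Act Res) (A : Set Agt) (F : List S → Agt → Act)
    (b : Agt → Res → ℕ) (s : S) (l : List S) : Prop :=
  M.ConsistentFrom A F s l ∧ M.BConsistent A F b l ∧
    ¬ ∃ l' : List S, l <+: l' ∧ l.length < l'.length ∧
        M.ConsistentFrom A F s l' ∧ M.BConsistent A F b l'

/-- `out(s, F_A, b)` : the set of b-maximal computations from s consistent with F. -/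
def outSet (M : RBCGS Agt S Act Res) (A : Set Agt) (F : List S → Agt → Act)
    (b : Agt → Res → ℕ) (s : S) : Set (List S) :=
  { l | M.BMaximal A F b s l }

end RBCGS

/-- Formulas of RB±ATL#. -/
inductive RBForm (Agt Res P : Type) : Type 1 where
  | prop : P → RBForm Agt Res P
  | neg : RBForm Agt Res P → RBForm Agt Res P
  | or : RBForm Agt Res P → RBForm Agt Res P → RBForm Agt Res P
  | nxt : Set Agt → (Agt → Res → ℕ) → RBForm Agt Res P → RBForm Agt Res P
  | untl : Set Agt → (Agt → Res → ℕ) → RBForm Agt Res P → RBForm Agt Res P → RBForm Agt Res P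
  | rls : Set Agt → (Agt → Res → ℕ) → RBForm Agt Res P → RBForm Agt Res P → RBForm Agt Res P

namespace RBCGS

variable {Agt S Act Res P : Type} [Inhabited S]

/-- Truth of an RB±ATL# formula at a state of an RB-CGS#, given a valuation V. -/
def Sat (M : RBCGS Agt S Act Res) (V : P → S → Prop) :
    RBForm Agt Res P → S → Prop
  | .prop p, s => V p s
  | .neg φ, s => ¬ Sat M V φ s
  | .or φ ψ, s => Sat M V φ s ∨ Sat M V ψ s
  | .nxt A b φ, s => ∃ F, M.Strategy A F ∧
      ∀ l ∈ M.outSet A F b s, 2 ≤ l.length ∧ Sat M V φ (l.getD 1 default)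
  | .untl A b φ ψ, s => ∃ F, M.Strategy A F ∧
      ∀ l ∈ M.outSet A F b s, ∃ i < l.length,
        Sat M V ψ (l.getD i default) ∧ ∀ j < i, Sat M V φ (l.getD j default)
  | .rls A b φ ψ, s => ∃ F, M.Strategy A F ∧
      ∀ l ∈ M.outSet A F b s,
        (∃ i < l.length, Sat M V φ (l.getD i default) ∧
          ∀ j ≤ i, Sat M V ψ (l.getD j default)) ∨
        (∀ j < l.length, Sat M V ψ (l.getD j default))

end RBCGS

/-- All coalitions occurring in the formula are nonempty. -/
def RBForm.goodCoal {Agt Res P : Type} : RBForm Agt Res P → Prop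
  | .prop _ => True
  | .neg φ => φ.goodCoal
  | .or φ ψ => φ.goodCoal ∧ ψ.goodCoal
  | .nxt A _ φ => A.Nonempty ∧ φ.goodCoal
  | .untl A _ φ ψ => A.Nonempty ∧ φ.goodCoal ∧ ψ.goodCoal
  | .rls A _ φ ψ => A.Nonempty ∧ φ.goodCoal ∧ ψ.goodCoal

namespace List

variable {α : Type} [Inhabited α]

def Release (p q : α → Prop) (l : List α) : Prop :=
  (∃ i < l.length, p (l.getD i default) ∧ ∀ j ≤ i, q (l.getD j default)) ∨
    ∀ j < l.length, q (l.getD j default)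

theorem release_nil (p q : α → Prop) : [].Release p q :=
  Or.inr fun _ h => absurd h (Nat.not_lt_zero _)

theorem release_cons {p q : α → Prop} {x : α} {l : List α} :
    (x :: l).Release p q ↔ q x ∧ (p x ∨ l.Release p q) := by
  simp only [Release, length_cons]
  constructor
  · rintro (⟨_ | i, hi, hp, hq⟩ | hq)
    · exact ⟨hq 0 le_rfl, Or.inl hp⟩
    · exact ⟨hq 0 (Nat.zero_le _),
        Or.inr (Or.inl ⟨i, by omega, hp, fun j hj => hq (j + 1) (by omega)⟩)⟩
    · exact ⟨hq 0 (by omega), Or.inr (Or.inr fun j hj => hq (j + 1) (by omega))⟩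
  · rintro ⟨hx, hp | ⟨i, hi, hp, hq⟩ | hq⟩
    · exact Or.inl ⟨0, by omega, hp, fun j hj => by rwa [Nat.le_zero.1 hj]⟩
    · exact Or.inl ⟨i + 1, by omega, hp, fun j hj => by cases j; exacts [hx, hq _ (by omega)]⟩
    · exact Or.inr fun j hj => by cases j; exacts [hx, hq _ (by omega)]

theorem release_singleton {p q : α → Prop} {x : α} (hx : q x) : [x].Release p q :=
  release_cons.2 ⟨hx, Or.inr (release_nil p q)⟩

end List

namespace RBCGS

variable {Agt S Act Res : Type} (M : RBCGS Agt S Act Res)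

def Affordable (A : Set Agt) (b : Agt → Res → ℕ) (s : S) (σ : Agt → Act) : Prop :=
  ∀ a ∈ A, ∀ ρ, M.consR s (σ a) ρ ≤ b a ρ

-- Truncated subtraction: this is the bound left after playing `σ` only when `σ` is affordable.
def nextBound (b : Agt → Res → ℕ) (s : S) (σ : Agt → Act) : Agt → Res → ℕ :=
  fun a ρ => b a ρ - M.consR s (σ a) ρ + M.prodR s (σ a) ρ

variable {M}

theorem one_le_consR_res1 {s : S} {a : Agt} {α : Act} (h : α ∈ M.d s a) :
    1 ≤ M.consR s α M.res1 := by
  have := M.cost_first s a α h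
  unfold consR
  omega

theorem prodR_res1 {s : S} {a : Agt} {α : Act} (h : α ∈ M.d s a) :
    M.prodR s α M.res1 = 0 := by
  have := M.cost_first s a α h
  unfold prodR
  omega

variable {A : Set Agt} {F F₁ F₂ : List S → Agt → Act} {b : Agt → Res → ℕ} {s s' : S}
  {t l : List S} {σ : Agt → Act} {G : S → List S → Agt → Act}

def shift (F : List S → Agt → Act) (s : S) : List S → Agt → Act := fun l => F (s :: l)

-- Play `σ` at `[s]`, then `G s'` from the first successor `s'`; the value at `[x]`, `x ≠ s`,
-- only keeps this a strategy.
open Classical in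
noncomputable def playThen (s : S) (σ : Agt → Act) (G : S → List S → Agt → Act) :
    List S → Agt → Act
  | [x] => if x = s then σ else G x [x]
  | _ :: y :: t => G y (y :: t)
  | [] => σ

theorem playThen_singleton : playThen s σ G [s] = σ := by
  simp [playThen]

theorem shift_playThen : shift (playThen s σ G) s (s' :: t) = G s' (s' :: t) := rfl

variable [Inhabited S]

def IsRun (M : RBCGS Agt S Act Res) (A : Set Agt) (F : List S → Agt → Act)
    (b : Agt → Res → ℕ) (s : S) (l : List S) : Prop :=
  M.ConsistentFrom A F s l ∧ M.BConsistent A F b l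

theorem exists_strategy (M : RBCGS Agt S Act Res) (A : Set Agt) : ∃ F, M.Strategy A F :=
  ⟨fun l a => (M.d_ne (l.getD (l.length - 1) default) a).some, fun _ _ a _ =>
    (M.d_ne _ a).some_mem⟩

theorem Strategy.shift (hF : M.Strategy A F) (s : S) : M.Strategy A (shift F s) := by
  intro l hl a ha
  obtain ⟨x, t, rfl⟩ := List.exists_cons_of_ne_nil hl
  simpa [RBCGS.shift] using hF (s :: x :: t) (List.cons_ne_nil _ _) a ha

theorem strategy_playThen (hσ : M.JointAt A s σ) (hG : ∀ y, M.Strategy A (G y)) :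
    M.Strategy A (playThen s σ G) := by
  rintro (_ | ⟨x, _ | ⟨y, t⟩⟩) hl
  · exact absurd rfl hl
  · by_cases hx : x = s
    · subst hx; simpa [RBCGS.playThen] using hσ
    · simpa [RBCGS.playThen, hx] using hG x [x] (List.cons_ne_nil _ _)
  · simpa [RBCGS.playThen] using hG y (y :: t) (List.cons_ne_nil _ _)

theorem Strategy.mem_d (hF : M.Strategy A F) {a : Agt} (ha : a ∈ A) {i : ℕ}
    (hi : i < l.length) : F (l.take (i + 1)) a ∈ M.d (l.getD i default) a := by
  have := hF (l.take (i + 1)) (List.ne_nil_of_length_pos (by simp; omega)) a ha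
  simpa [Nat.min_eq_left (Nat.succ_le_of_lt hi), List.getElem?_eq_getElem hi] using this

theorem ConsistentFrom.eq_cons (h : M.ConsistentFrom A F s l) : ∃ t, l = s :: t := by
  obtain ⟨hl, h0, -⟩ := h
  obtain ⟨x, t, rfl⟩ := List.exists_cons_of_ne_nil hl
  exact ⟨t, by simpa using h0⟩

theorem bMaximal_iff : M.BMaximal A F b s l ↔
    M.IsRun A F b s l ∧ ∀ l', l <+: l' → M.IsRun A F b s l' → l'.length ≤ l.length := by
  unfold BMaximal IsRun
  constructor
  · rintro ⟨hc, hb, hmax⟩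
    exact ⟨⟨hc, hb⟩, fun l' hpre hrun => not_lt.1 fun hlt => hmax ⟨l', hpre, hlt, hrun⟩⟩
  · rintro ⟨⟨hc, hb⟩, hmax⟩
    exact ⟨hc, hb, fun ⟨l', hpre, hlt, hrun⟩ => (hmax l' hpre hrun).not_gt hlt⟩

theorem eAvail_res1_add_le (hF : M.Strategy A F) {a : Agt} (ha : a ∈ A) :
    ∀ i < l.length, M.eAvail F b l i a M.res1 + i ≤ b a M.res1
  | 0, _ => by simp [eAvail]
  | i + 1, hi => by
    have hα := hF.mem_d ha (by omega : i < l.length)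
    have hbound := eAvail_res1_add_le hF ha i (by omega)
    have hpos := one_le_consR_res1 hα
    simp only [eAvail, prodR_res1 hα]
    omega

theorem IsRun.length_le (hF : M.Strategy A F) {a : Agt} (ha : a ∈ A)
    (hl : M.IsRun A F b s l) : l.length ≤ b a M.res1 + 1 := by
  by_contra! hlen
  have hα := hF.mem_d ha (by omega : b a M.res1 < l.length)
  have hcons := hl.2 a ha (b a M.res1) (by omega) M.res1
  have hbound := eAvail_res1_add_le (l := l) (b := b) hF ha (b a M.res1) (by omega)
  have hpos := one_le_consR_res1 hα
  omega

theorem outSet_nonempty (hA : A.Nonempty) (hF : M.Strategy A F) (b : Agt → Res → ℕ) (s : S) :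
    (M.outSet A F b s).Nonempty := by
  obtain ⟨a, ha⟩ := hA
  let lengths : Set ℕ := {n | ∃ l, M.IsRun A F b s l ∧ l.length = n}
  have hsingle : M.IsRun A F b s [s] :=
    ⟨⟨List.cons_ne_nil _ _, rfl, fun i hi => absurd hi (by simp)⟩,
      fun _ _ i hi => absurd hi (by simp)⟩
  have hbdd : BddAbove lengths := by
    refine ⟨b a M.res1 + 1, ?_⟩
    rintro _ ⟨l, hl, rfl⟩
    exact hl.length_le hF ha
  obtain ⟨l, hl, hlen⟩ := Nat.sSup_mem (s := lengths) ⟨1, [s], hsingle, rfl⟩ hbdd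
  exact ⟨l, bMaximal_iff.2 ⟨hl, fun l' _ hl' => hlen ▸ le_csSup hbdd ⟨l', hl', rfl⟩⟩⟩

theorem eAvail_congr (h : ∀ t, F₁ (s :: t) = F₂ (s :: t)) :
    M.eAvail F₁ b (s :: t) = M.eAvail F₂ b (s :: t) := by
  funext i
  induction i with
  | zero => rfl
  | succ i ih => simp only [eAvail, ih, List.take_succ_cons, h]

theorem isRun_congr (h : ∀ t, F₁ (s :: t) = F₂ (s :: t)) :
    M.IsRun A F₁ b s l ↔ M.IsRun A F₂ b s l := by
  suffices ∀ {F₁ F₂}, (∀ t, F₁ (s :: t) = F₂ (s :: t)) →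
      M.IsRun A F₁ b s l → M.IsRun A F₂ b s l from ⟨this h, this fun t => (h t).symm⟩
  intro F₁ F₂ h ⟨hc, hb⟩
  obtain ⟨t, rfl⟩ := hc.eq_cons
  refine ⟨⟨hc.1, hc.2.1, fun i hi => ?_⟩, fun a ha i hi ρ => ?_⟩
  · simpa [List.take_succ_cons, h] using hc.2.2 i hi
  · simpa [List.take_succ_cons, h, eAvail_congr h] using hb a ha i hi ρ

theorem outSet_congr (h : ∀ t, F₁ (s :: t) = F₂ (s :: t)) :
    M.outSet A F₁ b s = M.outSet A F₂ b s := by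
  ext l
  simp only [outSet, Set.mem_ofPred_eq, bMaximal_iff, isRun_congr h]

theorem eAvail_cons_succ {a : Agt} {ρ : Res} (h : M.consR s (F [s] a) ρ ≤ b a ρ) :
    ∀ i, M.eAvail F b (s :: l) (i + 1) a ρ =
      M.eAvail (shift F s) (M.nextBound b s (F [s])) l i a ρ
  | 0 => by simp only [eAvail, nextBound, List.getD_cons_zero, List.take_succ_cons,
      List.take_zero]; omega
  | i + 1 => by
    show M.eAvail F b (s :: l) (i + 1) a ρ - _ + _ = _
    rw [eAvail_cons_succ h i]
    rfl

theorem consistentFrom_cons_cons :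
    M.ConsistentFrom A F s (s :: s' :: t) ↔
      s' ∈ M.outA A s (F [s]) ∧ M.ConsistentFrom A (shift F s) s' (s' :: t) := by
  simp only [ConsistentFrom, ne_eq, reduceCtorEq, not_false_eq_true, List.getD_cons_zero,
    true_and, List.length_cons]
  constructor
  · intro h
    exact ⟨h 0 (by omega), fun i hi => h (i + 1) (by omega)⟩
  · rintro ⟨h0, h⟩ (_ | i) hi
    exacts [h0, h i (by omega)]

theorem bConsistent_cons_cons :
    M.BConsistent A F b (s :: s' :: t) ↔ M.Affordable A b s (F [s]) ∧
      M.BConsistent A (shift F s) (M.nextBound b s (F [s])) (s' :: t) := by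
  constructor
  · intro h
    have haff : M.Affordable A b s (F [s]) := fun a ha ρ => by
      simpa [eAvail] using h a ha 0 (by simp) ρ
    refine ⟨haff, fun a ha i hi ρ => ?_⟩
    have := h a ha (i + 1) (by simp at hi ⊢; omega) ρ
    rwa [eAvail_cons_succ (haff a ha ρ)] at this
  · rintro ⟨haff, h⟩ a ha (_ | i) hi ρ
    · simpa [eAvail] using haff a ha ρ
    · rw [eAvail_cons_succ (haff a ha ρ)]
      exact h a ha i (by simp at hi ⊢; omega) ρ

theorem isRun_cons_cons :
    M.IsRun A F b s (s :: s' :: t) ↔ M.Affordable A b s (F [s]) ∧ s' ∈ M.outA A s (F [s]) ∧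
      M.IsRun A (shift F s) (M.nextBound b s (F [s])) s' (s' :: t) := by
  simp only [IsRun, consistentFrom_cons_cons, bConsistent_cons_cons]
  tauto

theorem mem_outSet_cons_cons (haff : M.Affordable A b s (F [s])) :
    s :: s' :: t ∈ M.outSet A F b s ↔ s' ∈ M.outA A s (F [s]) ∧
      s' :: t ∈ M.outSet A (shift F s) (M.nextBound b s (F [s])) s' := by
  simp only [outSet, Set.mem_ofPred_eq, bMaximal_iff, isRun_cons_cons, haff, true_and,
    and_assoc]
  constructor
  · rintro ⟨hs', hrun, hmax⟩
    refine ⟨hs', hrun, fun l' hpre hrun' => ?_⟩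
    obtain ⟨t', rfl⟩ := hrun'.1.eq_cons
    have := hmax (s :: s' :: t') (List.cons_prefix_cons.2 ⟨rfl, hpre⟩)
      (isRun_cons_cons.2 ⟨haff, hs', hrun'⟩)
    simpa using this
  · rintro ⟨hs', hrun, hmax⟩
    refine ⟨hs', hrun, fun l' ⟨r, hr⟩ hrun' => ?_⟩
    subst hr
    have := hmax (s' :: (t ++ r)) ⟨r, rfl⟩ (isRun_cons_cons.1 hrun').2.2
    simpa using this

theorem mem_outSet_cases (hl : l ∈ M.outSet A F b s) :
    l = [s] ∨ ∃ s' t, l = s :: s' :: t ∧ M.Affordable A b s (F [s]) ∧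
      s' ∈ M.outA A s (F [s]) ∧
      s' :: t ∈ M.outSet A (shift F s) (M.nextBound b s (F [s])) s' := by
  obtain ⟨hrun, -⟩ := bMaximal_iff.1 hl
  obtain ⟨_ | ⟨s', t⟩, rfl⟩ := hrun.1.eq_cons
  · exact Or.inl rfl
  · have haff := (isRun_cons_cons.1 hrun).1
    exact Or.inr ⟨s', t, rfl, haff, (mem_outSet_cons_cons haff).1 hl⟩

def WinsRelease (M : RBCGS Agt S Act Res) (A : Set Agt) (b : Agt → Res → ℕ)
    (p q : S → Prop) (s : S) : Prop :=
  ∃ F, M.Strategy A F ∧ ∀ l ∈ M.outSet A F b s, l.Release p q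

variable {p q : S → Prop}

theorem WinsRelease.unfold (hA : A.Nonempty) (h : M.WinsRelease A b p q s) :
    q s ∧ (p s ∨
      (∃ σ, M.JointAt A s σ ∧ (¬ M.Affordable A b s σ ∨ ¬ (M.outA A s σ).Nonempty)) ∨
      ∃ σ, M.JointAt A s σ ∧ M.Affordable A b s σ ∧ (M.outA A s σ).Nonempty ∧
        ∀ s' ∈ M.outA A s σ, M.WinsRelease A (M.nextBound b s σ) p q s') := by
  obtain ⟨F, hF, hwin⟩ := h
  obtain ⟨l, hl⟩ := outSet_nonempty hA hF b s
  obtain ⟨t, rfl⟩ := (bMaximal_iff.1 hl).1.1.eq_cons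
  refine ⟨(List.release_cons.1 (hwin _ hl)).1, or_iff_not_imp_left.2 fun hp => ?_⟩
  have hσ : M.JointAt A s (F [s]) := hF [s] (List.cons_ne_nil _ _)
  by_cases hstep : M.Affordable A b s (F [s]) ∧ (M.outA A s (F [s])).Nonempty
  · refine Or.inr ⟨F [s], hσ, hstep.1, hstep.2, fun s' hs' =>
      ⟨shift F s, hF.shift s, fun l' hl' => ?_⟩⟩
    obtain ⟨t', rfl⟩ := (bMaximal_iff.1 hl').1.1.eq_cons
    have := hwin _ ((mem_outSet_cons_cons hstep.1).2 ⟨hs', hl'⟩)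
    exact (List.release_cons.1 this).2.resolve_left hp
  · exact Or.inl ⟨F [s], hσ, not_and_or.1 hstep⟩

theorem winsRelease_of_now (hq : q s) (hp : p s) : M.WinsRelease A b p q s := by
  obtain ⟨F, hF⟩ := M.exists_strategy A
  refine ⟨F, hF, fun l hl => ?_⟩
  obtain ⟨t, rfl⟩ := (bMaximal_iff.1 hl).1.1.eq_cons
  exact List.release_cons.2 ⟨hq, Or.inl hp⟩

theorem winsRelease_of_blocked (hq : q s) (hσ : M.JointAt A s σ)
    (hblocked : ¬ M.Affordable A b s σ ∨ ¬ (M.outA A s σ).Nonempty) :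
    M.WinsRelease A b p q s := by
  obtain ⟨F, hF⟩ := M.exists_strategy A
  refine ⟨playThen s σ fun _ => F, strategy_playThen hσ fun _ => hF, fun l hl => ?_⟩
  rcases mem_outSet_cases hl with rfl | ⟨s', t, -, haff, hs', -⟩
  · exact List.release_singleton hq
  · rw [playThen_singleton] at haff hs'
    exact absurd ⟨haff, s', hs'⟩ (not_and_or.2 hblocked)

theorem winsRelease_of_step (hq : q s) (hσ : M.JointAt A s σ)
    (hnext : ∀ s' ∈ M.outA A s σ, M.WinsRelease A (M.nextBound b s σ) p q s') :
    M.WinsRelease A b p q s := by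
  have : ∀ s', ∃ G, M.Strategy A G ∧ (s' ∈ M.outA A s σ →
      ∀ l ∈ M.outSet A G (M.nextBound b s σ) s', l.Release p q) := by
    intro s'
    by_cases hs' : s' ∈ M.outA A s σ
    · obtain ⟨G, hG, hwin⟩ := hnext s' hs'
      exact ⟨G, hG, fun _ => hwin⟩
    · obtain ⟨G, hG⟩ := M.exists_strategy A
      exact ⟨G, hG, fun h => absurd h hs'⟩
  choose G hG hwin using this
  refine ⟨playThen s σ G, strategy_playThen hσ hG, fun l hl => ?_⟩
  rcases mem_outSet_cases hl with rfl | ⟨s', t, rfl, -, hs', hl'⟩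
  · exact List.release_singleton hq
  · rw [playThen_singleton] at hs' hl'
    rw [outSet_congr fun _ => shift_playThen] at hl'
    exact List.release_cons.2 ⟨hq, Or.inr (hwin s' hs' _ hl')⟩

end RBCGS

/-- Fixed-point characterization of the resource-bounded Release modality
(correctness of the release-strategy search). -/
theorem release_fixed_point {Agt S Act Res P : Type} [Inhabited S]
    (M : RBCGS Agt S Act Res) (V : P → S → Prop)
    (A : Set Agt) (hA : A.Nonempty) (b : Agt → Res → ℕ) (s : S)
    (φ ψ : RBForm Agt Res P) :
    M.Sat V (.rls A b φ ψ) s ↔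
      M.Sat V ψ s ∧
        (M.Sat V φ s ∨
          (∃ σA : Agt → Act, (∀ a ∈ A, σA a ∈ M.d s a) ∧
            (¬ (∀ a ∈ A, ∀ ρ : Res, M.consR s (σA a) ρ ≤ b a ρ) ∨
              ¬ (M.outA A s σA).Nonempty)) ∨
          (∃ σA : Agt → Act, (∀ a ∈ A, σA a ∈ M.d s a) ∧
            (∀ a ∈ A, ∀ ρ : Res, M.consR s (σA a) ρ ≤ b a ρ) ∧
            (M.outA A s σA).Nonempty ∧
            ∀ s' ∈ M.outA A s σA,
              M.Sat V
                (.rls A (fun a ρ => b a ρ - M.consR s (σA a) ρ + M.prodR s (σA a) ρ) φ ψ)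
                s')) := by
  show M.WinsRelease A b (M.Sat V φ) (M.Sat V ψ) s ↔ _
  constructor
  · exact RBCGS.WinsRelease.unfold hA
  · rintro ⟨hq, hp | ⟨σ, hσ, hblocked⟩ | ⟨σ, hσ, -, -, hnext⟩⟩
    · exact RBCGS.winsRelease_of_now hq hp
    · exact RBCGS.winsRelease_of_blocked hq hσ hblocked
    · exact RBCGS.winsRelease_of_step hq hσ hnext
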